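/- arXiv:2208.13945 — 2 statements merged into one kernel-verified Lean document; each statement's English description precedes it below -/
import Mathlib

section
/- Let M ∈ ℝ with M ≠ 0, and let τ₁, τ₂ ∈ ℝ satisfy |M·τ₁| < 1 and |M·τ₂| < 1. For i = 1, 2 let u_{M,τᵢ} : ℝ → ℝ be the unique function with u_{M,τᵢ}(θ) = M·cos(θ − τᵢ·u_{M,τᵢ}(θ)) for all θ. If u_{M,τ₁}(θ) = u_{M,τ₂}(θ) for all θ ∈ ℝ, then τ₁ = τ₂. -/
open Real

private lemma cos_lip (a b : ℝ) : |Real.cos a - Real.cos b| ≤ |a - b| := by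
  rw [Real.cos_sub_cos]
  have h1 : |Real.sin ((a + b) / 2)| ≤ 1 := Real.abs_sin_le_one _
  have h2 : |Real.sin ((a - b) / 2)| ≤ |(a - b) / 2| := Real.abs_sin_le_abs
  calc |(-2 : ℝ) * Real.sin ((a + b) / 2) * Real.sin ((a - b) / 2)|
      = 2 * |Real.sin ((a + b) / 2)| * |Real.sin ((a - b) / 2)| := by
        rw [abs_mul, abs_mul, abs_neg, abs_two]
    _ ≤ 2 * 1 * |(a - b) / 2| := by
        apply mul_le_mul _ h2 (abs_nonneg _) (by norm_num)
        apply mul_le_mul_of_nonneg_left h1 (by norm_num)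
    _ = |a - b| := by rw [abs_div, abs_two]; ring

/-- Let `M ≠ 0` and `|M * τ₁| < 1`, `|M * τ₂| < 1`. If the unique functions
`u₁, u₂ : ℝ → ℝ` satisfying the implicit equations `uᵢ θ = M * cos (θ - τᵢ * uᵢ θ)` coincide,
then `τ₁ = τ₂`. (Injectivity: the transmitted profile determines `∫ α` along the ray.) -/
theorem implicit_burgers_solution_determines_tau (M τ₁ τ₂ : ℝ) (hM : M ≠ 0)
    (h1 : |M * τ₁| < 1) (h2 : |M * τ₂| < 1) (u₁ u₂ : ℝ → ℝ)
    (hu₁ : ∀ θ : ℝ, u₁ θ = M * Real.cos (θ - τ₁ * u₁ θ))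
    (hu₂ : ∀ θ : ℝ, u₂ θ = M * Real.cos (θ - τ₂ * u₂ θ))
    (heq : ∀ θ : ℝ, u₁ θ = u₂ θ) :
    τ₁ = τ₂ := by
  have hu₂' : ∀ θ : ℝ, u₁ θ = M * Real.cos (θ - τ₂ * u₁ θ) := by
    intro θ; rw [heq θ]; exact hu₂ θ
  have hcos : ∀ θ : ℝ, Real.cos (θ - τ₁ * u₁ θ) = Real.cos (θ - τ₂ * u₁ θ) := by
    intro θ
    exact mul_left_cancel₀ hM ((hu₁ θ).symm.trans (hu₂' θ))
  -- u₁ (π/2) = 0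
  have hzero : u₁ (π / 2) = 0 := by
    by_contra hx
    have hxeq : u₁ (π / 2) = M * Real.sin (τ₁ * u₁ (π / 2)) := by
      conv_lhs => rw [hu₁ (π / 2)]
      rw [Real.cos_pi_div_two_sub]
    have habs : |u₁ (π / 2)| = |M| * |Real.sin (τ₁ * u₁ (π / 2))| :=
      (congrArg abs hxeq).trans (abs_mul _ _)
    have : |u₁ (π / 2)| < |u₁ (π / 2)| := by
      calc |u₁ (π / 2)| = |M| * |Real.sin (τ₁ * u₁ (π / 2))| := habs
        _ ≤ |M| * |τ₁ * u₁ (π / 2)| :=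
            mul_le_mul_of_nonneg_left Real.abs_sin_le_abs (abs_nonneg _)
        _ = |M * τ₁| * |u₁ (π / 2)| := by rw [abs_mul, abs_mul, ← mul_assoc]
        _ < 1 * |u₁ (π / 2)| := mul_lt_mul_of_pos_right h1 (abs_pos.mpr hx)
        _ = |u₁ (π / 2)| := one_mul _
    exact absurd this (lt_irrefl _)
  have hM1 : (0:ℝ) < 1 - |M * τ₁| := by linarith [abs_nonneg (M * τ₁)]
  set C : ℝ := |M| / (1 - |M * τ₁|) with hC
  have hC0 : 0 ≤ C := div_nonneg (abs_nonneg _) hM1.le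
  -- Lipschitz-type bound near π/2
  have hbound : ∀ θ : ℝ, |u₁ θ| ≤ C * |θ - π / 2| := by
    intro θ
    have e1 : u₁ θ - u₁ (π / 2)
        = M * (Real.cos (θ - τ₁ * u₁ θ) - Real.cos (π / 2 - τ₁ * u₁ (π / 2))) := by
      conv_lhs => rw [hu₁ θ, hu₁ (π / 2)]
      ring
    have e2 : (θ - τ₁ * u₁ θ) - (π / 2 - τ₁ * u₁ (π / 2))
        = (θ - π / 2) - τ₁ * (u₁ θ - u₁ (π / 2)) := by ring
    have key : |u₁ θ - u₁ (π / 2)|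
        ≤ |M| * (|θ - π / 2| + |τ₁| * |u₁ θ - u₁ (π / 2)|) := by
      calc |u₁ θ - u₁ (π / 2)|
          = |M| * |Real.cos (θ - τ₁ * u₁ θ) - Real.cos (π / 2 - τ₁ * u₁ (π / 2))| := by
            rw [e1, abs_mul]
        _ ≤ |M| * |(θ - τ₁ * u₁ θ) - (π / 2 - τ₁ * u₁ (π / 2))| :=
            mul_le_mul_of_nonneg_left (cos_lip _ _) (abs_nonneg _)
        _ ≤ |M| * (|θ - π / 2| + |τ₁| * |u₁ θ - u₁ (π / 2)|) := by
            apply mul_le_mul_of_nonneg_left _ (abs_nonneg _)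
            rw [e2]
            calc |(θ - π / 2) - τ₁ * (u₁ θ - u₁ (π / 2))|
                ≤ |θ - π / 2| + |τ₁ * (u₁ θ - u₁ (π / 2))| := abs_sub _ _
              _ = |θ - π / 2| + |τ₁| * |u₁ θ - u₁ (π / 2)| := by rw [abs_mul]
    rw [hzero, sub_zero] at key
    have hmm : |M| * |τ₁| = |M * τ₁| := (abs_mul M τ₁).symm
    rw [mul_add, ← mul_assoc, hmm] at key
    have key2 : (1 - |M * τ₁|) * |u₁ θ| ≤ |M| * |θ - π / 2| := by
      have : (1 - |M * τ₁|) * |u₁ θ| = |u₁ θ| - |M * τ₁| * |u₁ θ| := by ring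
      linarith [this, key]
    rw [hC, div_mul_eq_mul_div, le_div_iff₀ hM1, mul_comm (|u₁ θ|)]
    linarith
  -- main argument
  by_contra hne
  set K : ℝ := 1 + C * (|τ₁| + |τ₂| + |τ₂ - τ₁|) with hK
  have hK1 : (1:ℝ) ≤ K := by
    have : 0 ≤ C * (|τ₁| + |τ₂| + |τ₂ - τ₁|) := by positivity
    linarith
  have hK0 : (0:ℝ) < K := by linarith
  set ε : ℝ := π / (4 * K) with hε
  have hε0 : 0 < ε := div_pos Real.pi_pos (by linarith)
  have hεK : ε * K = π / 4 := by
    rw [hε]; field_simp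
  have hεle : ε ≤ π / 4 := by
    calc ε = ε * 1 := (mul_one ε).symm
      _ ≤ ε * K := by
          exact mul_le_mul_of_nonneg_left hK1 hε0.le
      _ = π / 4 := hεK
  set θ : ℝ := π / 2 + ε with hθ
  set v : ℝ := u₁ θ with hv
  have hvb : |v| ≤ C * ε := by
    have := hbound θ
    rwa [hθ, add_sub_cancel_left, abs_of_pos hε0] at this
  have hvne : v ≠ 0 := by
    intro h0
    have he := hu₁ θ
    rw [← hv, h0, mul_zero, sub_zero] at he
    have hcosθ : Real.cos θ = 0 := by
      rcases mul_eq_zero.mp he.symm with h | h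
      · exact absurd h hM
      · exact h
    rw [hθ, add_comm, Real.cos_add_pi_div_two] at hcosθ
    have hsin : Real.sin ε > 0 :=
      Real.sin_pos_of_pos_of_lt_pi hε0 (by linarith [Real.pi_pos])
    rw [neg_eq_zero] at hcosθ
    linarith
  -- product formula
  have h0 : Real.cos (θ - τ₁ * v) - Real.cos (θ - τ₂ * v) = 0 := by
    rw [hv]; rw [hcos θ]; ring
  rw [Real.cos_sub_cos] at h0
  have hprod : Real.sin (((θ - τ₁ * v) + (θ - τ₂ * v)) / 2)
      * Real.sin (((θ - τ₁ * v) - (θ - τ₂ * v)) / 2) = 0 := by linarith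
  have hCε : 0 ≤ C * ε := mul_nonneg hC0 hε0.le
  -- first factor positive
  have hs : Real.sin (((θ - τ₁ * v) + (θ - τ₂ * v)) / 2) > 0 := by
    have hsd : |((θ - τ₁ * v) + (θ - τ₂ * v)) / 2 - π / 2| ≤ π / 4 := by
      have e3 : ((θ - τ₁ * v) + (θ - τ₂ * v)) / 2 - π / 2
          = ε - (τ₁ + τ₂) * v / 2 := by rw [hθ]; ring
      rw [e3]
      have ht : |(τ₁ + τ₂) * v / 2| ≤ (|τ₁| + |τ₂|) * (C * ε) / 2 := by
        rw [abs_div, abs_mul, abs_two]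
        have h1 : |τ₁ + τ₂| * |v| ≤ (|τ₁| + |τ₂|) * (C * ε) :=
          mul_le_mul (abs_add_le _ _) hvb (abs_nonneg _)
            (by positivity)
        linarith
      calc |ε - (τ₁ + τ₂) * v / 2| ≤ |ε| + |(τ₁ + τ₂) * v / 2| := abs_sub _ _
        _ ≤ ε + (|τ₁| + |τ₂|) * (C * ε) / 2 := by
            rw [abs_of_pos hε0]; linarith
        _ ≤ ε * K := by
            rw [hK]
            have hr : ε * (1 + C * (|τ₁| + |τ₂| + |τ₂ - τ₁|))
                = ε + (C * ε) * |τ₁| + (C * ε) * |τ₂| + (C * ε) * |τ₂ - τ₁| := by ring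
            have hl : ε + (|τ₁| + |τ₂|) * (C * ε) / 2
                = ε + (C * ε) * |τ₁| / 2 + (C * ε) * |τ₂| / 2 := by ring
            rw [hr, hl]
            linarith [mul_nonneg hCε (abs_nonneg (τ₂ - τ₁)),
              mul_nonneg hCε (abs_nonneg τ₁), mul_nonneg hCε (abs_nonneg τ₂)]
        _ = π / 4 := hεK
    have habs := abs_le.mp hsd
    apply Real.sin_pos_of_pos_of_lt_pi
    · nlinarith [Real.pi_pos, habs.1]
    · nlinarith [Real.pi_pos, habs.2]
  have harg : ((θ - τ₁ * v) - (θ - τ₂ * v)) / 2 = (τ₂ - τ₁) * v / 2 := by ring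
  rw [harg] at hprod
  have hwne : (τ₂ - τ₁) * v / 2 ≠ 0 := by
    apply div_ne_zero _ two_ne_zero
    exact mul_ne_zero (sub_ne_zero.mpr (Ne.symm hne)) hvne
  have hwb : |(τ₂ - τ₁) * v / 2| < π := by
    rw [abs_div, abs_mul, abs_two]
    have h1 : |τ₂ - τ₁| * |v| ≤ |τ₂ - τ₁| * (C * ε) :=
      mul_le_mul_of_nonneg_left hvb (abs_nonneg _)
    have h2 : |τ₂ - τ₁| * (C * ε) / 2 ≤ ε * K := by
      rw [hK]
      have hr : ε * (1 + C * (|τ₁| + |τ₂| + |τ₂ - τ₁|))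
          = ε + (C * ε) * |τ₁| + (C * ε) * |τ₂| + (C * ε) * |τ₂ - τ₁| := by ring
      have hl : |τ₂ - τ₁| * (C * ε) / 2 = (C * ε) * |τ₂ - τ₁| / 2 := by ring
      rw [hr, hl]
      linarith [mul_nonneg hCε (abs_nonneg (τ₂ - τ₁)),
        mul_nonneg hCε (abs_nonneg τ₁), mul_nonneg hCε (abs_nonneg τ₂), hε0]
    have h3 : |τ₂ - τ₁| * |v| / 2 ≤ |τ₂ - τ₁| * (C * ε) / 2 := by linarith
    have := hεK
    linarith [Real.pi_pos]
  have hsinw : Real.sin ((τ₂ - τ₁) * v / 2) ≠ 0 := by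
    intro hz
    have hpos : Real.sin |(τ₂ - τ₁) * v / 2| > 0 :=
      Real.sin_pos_of_pos_of_lt_pi (abs_pos.mpr hwne) hwb
    rcases abs_choice ((τ₂ - τ₁) * v / 2) with h | h
    · rw [h, hz] at hpos; linarith
    · rw [h, Real.sin_neg, hz] at hpos; linarith
  rcases mul_eq_zero.mp hprod with h | h
  · linarith
  · exact hsinw h
end

section
/- Let M ∈ ℝ. There exists a constant C (depending only on M) such that for all τ ∈ ℝ with |M·τ| ≤ 1/2 and all θ ∈ ℝ, the unique solution u_{M,τ}(θ) of u = M·cos(θ − τ·u) satisfies |u_{M,τ}(θ) − M·cos θ − (M²/2)·τ·sin(2θ)| ≤ C·τ². -/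
open Classical in

/-- `implicitSol M τ θ` is the unique real `u` with `u = M * cos (θ - τ * u)`
(which exists and is unique whenever `|M * τ| < 1`), and `0` otherwise. -/
noncomputable def implicitSol (M τ θ : ℝ) : ℝ :=
  if h : ∃! u : ℝ, u = M * Real.cos (θ - τ * u) then h.choose else 0

/-!
The map `u ↦ M cos (θ - τ u)` is a contraction with constant `|M τ|`, so `u = u_{M,τ}(θ)`
exists and satisfies `|u| ≤ |M|`, hence `|τ u| ≤ |M τ|`. Expanding `cos (θ - τ u)` by the
addition formula and subtracting `M cos θ + M² τ sin θ cos θ` leaves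
`M cos θ (cos (τ u) - 1) + M sin θ (sin (τ u) - τ u) + M τ sin θ (u - M cos θ)`:
the first two terms are `O((τ u)²)` by Taylor, and the last is `O(τ²)` because the
first-order error `u - M cos θ = M (cos (θ - τ u) - cos θ)` is `O(τ)`.
-/

open Real

section

variable {M τ θ u : ℝ}

lemma lipschitzWith_mul_cos_sub_mul (M τ θ : ℝ) :
    LipschitzWith ‖M * τ‖₊ fun u => M * cos (θ - τ * u) := by
  refine LipschitzWith.of_dist_le_mul fun a b => ?_
  simp only [Real.dist_eq, coe_nnnorm, Real.norm_eq_abs]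
  calc |M * cos (θ - τ * a) - M * cos (θ - τ * b)|
      = |M| * |cos (θ - τ * a) - cos (θ - τ * b)| := by rw [← mul_sub, abs_mul]
    _ ≤ |M| * |(θ - τ * a) - (θ - τ * b)| :=
      mul_le_mul_of_nonneg_left (abs_cos_sub_cos_le _ _) (abs_nonneg M)
    _ = |M * τ| * |a - b| := by
      rw [show (θ - τ * a) - (θ - τ * b) = τ * (b - a) by ring, abs_mul, abs_mul,
        abs_sub_comm b a, mul_assoc]

lemma existsUnique_eq_mul_cos_sub_mul (h : |M * τ| < 1) :
    ∃! u : ℝ, u = M * cos (θ - τ * u) := by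
  have hf : ContractingWith ‖M * τ‖₊ fun u => M * cos (θ - τ * u) :=
    ⟨by simpa [← NNReal.coe_lt_coe] using h, lipschitzWith_mul_cos_sub_mul M τ θ⟩
  exact ⟨hf.fixedPoint _, hf.fixedPoint_isFixedPt.symm,
    fun v hv => hf.fixedPoint_unique hv.symm⟩

lemma implicitSol_eq_mul_cos_sub_mul (h : |M * τ| < 1) :
    implicitSol M τ θ = M * cos (θ - τ * implicitSol M τ θ) := by
  have he := existsUnique_eq_mul_cos_sub_mul (θ := θ) h
  rw [implicitSol, dif_pos he]
  exact he.choose_spec.1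

lemma abs_cos_sub_one_le (x : ℝ) : |cos x - 1| ≤ x ^ 2 / 2 := by
  rw [abs_sub_comm, abs_of_nonneg (sub_nonneg.2 (cos_le_one x))]
  linarith [one_sub_sq_div_two_le_cos (x := x)]

lemma abs_sin_sub_self_le_sq_div_six {x : ℝ} (hx : |x| ≤ 1) : |sin x - x| ≤ x ^ 2 / 6 := by
  calc |sin x - x| = |x - sin x| := abs_sub_comm _ _
    _ ≤ |x| ^ 3 / 6 := abs_sub_sin_le x
    _ ≤ |x| ^ 2 / 6 := by
      gcongr ?_ / 6
      exact pow_le_pow_of_le_one (abs_nonneg x) hx (by norm_num)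
    _ = x ^ 2 / 6 := by rw [sq_abs]

lemma abs_le_of_eq_mul_cos (hu : u = M * cos (θ - τ * u)) : |u| ≤ |M| := by
  rw [hu, abs_mul]
  exact mul_le_of_le_one_right (abs_nonneg M) (abs_cos_le_one _)

lemma abs_sub_mul_cos_le_of_eq_mul_cos (hu : u = M * cos (θ - τ * u)) :
    |u - M * cos θ| ≤ M ^ 2 * |τ| := by
  calc |u - M * cos θ| = |M| * |cos (θ - τ * u) - cos θ| := by
        rw [← abs_mul, mul_sub, ← hu]
    _ ≤ |M| * (|τ| * |u|) := by
        gcongr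
        simpa [abs_mul] using abs_cos_sub_cos_le (θ - τ * u) θ
    _ ≤ |M| * (|τ| * |M|) := by gcongr |M| * (|τ| * ?_); exact abs_le_of_eq_mul_cos hu
    _ = M ^ 2 * |τ| := by rw [← sq_abs M]; ring

lemma sub_second_harmonic_eq_of_eq_mul_cos (hu : u = M * cos (θ - τ * u)) :
    u - M * cos θ - M ^ 2 / 2 * τ * sin (2 * θ) =
      M * cos θ * (cos (τ * u) - 1) + M * sin θ * (sin (τ * u) - τ * u)
        + M * τ * sin θ * (u - M * cos θ) := by
  rw [cos_sub] at hu
  linear_combination hu - M ^ 2 / 2 * τ * sin_two_mul θ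

lemma abs_sub_second_harmonic_le_of_eq_mul_cos (hu : u = M * cos (θ - τ * u))
    (h : |M * τ| ≤ 1) :
    |u - M * cos θ - M ^ 2 / 2 * τ * sin (2 * θ)| ≤ 5 / 3 * |M| ^ 3 * τ ^ 2 := by
  have hτu : |τ * u| ≤ |M * τ| := by
    rw [abs_mul, abs_mul, mul_comm |M|]
    exact mul_le_mul_of_nonneg_left (abs_le_of_eq_mul_cos hu) (abs_nonneg τ)
  have hτu_sq : (τ * u) ^ 2 ≤ M ^ 2 * τ ^ 2 := by
    rw [← sq_abs, ← mul_pow, ← sq_abs (M * τ)]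
    exact pow_le_pow_left₀ (abs_nonneg _) hτu 2
  have hcos : |M * cos θ * (cos (τ * u) - 1)| ≤ |M| * 1 * (M ^ 2 * τ ^ 2 / 2) := by
    rw [abs_mul, abs_mul]
    gcongr ?_ * ?_ * ?_
    · exact abs_cos_le_one θ
    · exact (abs_cos_sub_one_le _).trans (by linarith)
  have hsin : |M * sin θ * (sin (τ * u) - τ * u)| ≤ |M| * 1 * (M ^ 2 * τ ^ 2 / 6) := by
    rw [abs_mul, abs_mul]
    gcongr ?_ * ?_ * ?_
    · exact abs_sin_le_one θ
    · exact (abs_sin_sub_self_le_sq_div_six (hτu.trans h)).trans (by linarith)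
  have hfirst : |M * τ * sin θ * (u - M * cos θ)| ≤ |M| * |τ| * 1 * (M ^ 2 * |τ|) := by
    rw [abs_mul, abs_mul, abs_mul]
    gcongr ?_ * ?_ * ?_ * ?_
    · exact abs_sin_le_one θ
    · exact abs_sub_mul_cos_le_of_eq_mul_cos hu
  have hτ_sq : |τ| * |τ| = τ ^ 2 := by rw [abs_mul_abs_self, sq]
  have hM : |M| ^ 3 = |M| * M ^ 2 := by rw [← sq_abs M]; ring
  rw [sub_second_harmonic_eq_of_eq_mul_cos hu, hM]
  calc _ ≤ _ := abs_add_three _ _ _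
    _ ≤ 5 / 3 * (|M| * M ^ 2) * τ ^ 2 := by
      linear_combination hcos + hsin + hfirst + |M| * M ^ 2 * hτ_sq

end

/-- For each `M` there is a constant `C = C(M)` such that for all `τ` with
`|M * τ| ≤ 1/2` and all `θ`, the unique solution `u_{M,τ}(θ)` of `u = M * cos (θ - τ * u)`
satisfies `|u_{M,τ}(θ) - M cos θ - (M²/2) τ sin (2θ)| ≤ C τ²`. -/
theorem implicitSol_second_harmonic_expansion (M : ℝ) :
    ∃ C : ℝ, ∀ τ θ : ℝ, |M * τ| ≤ 1 / 2 →
      |implicitSol M τ θ - M * Real.cos θ - M ^ 2 / 2 * τ * Real.sin (2 * θ)| ≤ C * τ ^ 2 :=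
  ⟨5 / 3 * |M| ^ 3, fun τ θ h => abs_sub_second_harmonic_le_of_eq_mul_cos
    (implicitSol_eq_mul_cos_sub_mul (h.trans_lt (by norm_num))) (h.trans (by norm_num))⟩
end
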